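/- In the simulation of one left move by subnets MA5LR and MD5LR, the total number of transition firing steps (counting a multi-instance firing as one step) is exactly 12: the firing sequence is t11, t13, t14, t16, t17, t19, t21, t22, t24, t25, t27, t28, with instance counts R, 1, R·5, 1, X, 1, L div 5, 1, L mod 5, 1, L div 5, 1 respectively; hence together with at most one blank-insertion firing, at most 13 transitions fire per simulated tape move. -/

import Mathlib

/-- Data state of the tape subnets: `(L, X, R, p9, p14)` where `p9` and `p14`
are auxiliary counter places of subnets `MA5LR` and `MD5LR`. -/
abbrev NetState := ℕ × ℕ × ℕ × ℕ × ℕ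

/-- `t11` fires in `R` instances: moves `R` tokens out of place `R`, putting
`5` tokens into `p9` per instance. -/
def t11 : NetState → NetState := fun (L, X, R, p9, p14) => (L, X, 0, p9 + R * 5, p14)
/-- `t13`: control-flow firing (moves the zero marking), data unchanged. -/
def t13 : NetState → NetState := id
/-- `t14` fires in `R·5` instances: moves the tokens of `p9` back into `R`. -/
def t14 : NetState → NetState := fun (L, X, R, p9, p14) => (L, X, R + p9, 0, p14)
/-- `t16`: control-flow firing. -/
def t16 : NetState → NetState := id
/-- `t17` fires in `X` instances: adds `X` tokens to `R`, cleaning `X`. -/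
def t17 : NetState → NetState := fun (L, X, R, p9, p14) => (L, 0, R + X, p9, p14)
/-- `t19`: control-flow firing. -/
def t19 : NetState → NetState := id
/-- `t21` fires in `L div 5` instances: `L := L mod 5`, `p14 := L div 5`. -/
def t21 : NetState → NetState := fun (L, X, R, p9, p14) => (L % 5, X, R, p9, p14 + L / 5)
/-- `t22`: control-flow firing. -/
def t22 : NetState → NetState := id
/-- `t24` fires in `L mod 5` instances: moves the remaining tokens of `L`
into `X`. -/
def t24 : NetState → NetState := fun (L, X, R, p9, p14) => (0, X + L, R, p9, p14)
/-- `t25`: control-flow firing. -/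
def t25 : NetState → NetState := id
/-- `t27` fires in `L div 5` instances: returns the tokens of `p14` into `L`. -/
def t27 : NetState → NetState := fun (L, X, R, p9, p14) => (L + p14, X, R, p9, 0)
/-- `t28`: control-flow firing, clears place `LEFT` and marks `STEP`. -/
def t28 : NetState → NetState := id

/-- The firing sequence simulating one left move. -/
def leftMoveSeq : List (NetState → NetState) :=
  [t11, t13, t14, t16, t17, t19, t21, t22, t24, t25, t27, t28]

/-! `MA5LR` multiplies `R` by 5 by moving it fivefold through `p9` and then absorbs `X`;
`MD5LR` parks `L div 5` in `p14`, moves the remainder `L mod 5` into the emptied `X`, and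
returns `p14` to `L`. -/

def ma5lrSeq : List (NetState → NetState) := [t11, t13, t14, t16, t17, t19]

def md5lrSeq : List (NetState → NetState) := [t21, t22, t24, t25, t27, t28]

def fireSeq (seq : List (NetState → NetState)) (st : NetState) : NetState :=
  seq.foldl (fun st f => f st) st

theorem leftMoveSeq_eq_append : leftMoveSeq = ma5lrSeq ++ md5lrSeq := rfl

theorem fireSeq_append (s₁ s₂ : List (NetState → NetState)) (st : NetState) :
    fireSeq (s₁ ++ s₂) st = fireSeq s₂ (fireSeq s₁ st) :=
  List.foldl_append

theorem fireSeq_ma5lrSeq (L X R p14 : ℕ) :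
    fireSeq ma5lrSeq (L, X, R, 0, p14) = (L, 0, R * 5 + X, 0, p14) := by
  simp [fireSeq, ma5lrSeq, t11, t13, t14, t16, t17, t19]

/-- `t27` returns all of `p14` to `L`, so `p14` must start empty. -/
theorem fireSeq_md5lrSeq (L R p9 : ℕ) :
    fireSeq md5lrSeq (L, 0, R, p9, 0) = (L / 5, L % 5, R, p9, 0) := by
  simp [fireSeq, md5lrSeq, t21, t22, t24, t25, t27, t28]

/-- The simulation of one left move by subnets `MA5LR` and `MD5LR` takes
exactly 12 transition firing steps (each multi-instance firing counted as one
step): the sequence `t11, t13, t14, t16, t17, t19, t21, t22, t24, t25, t27,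
t28` computes `R := R·5 + X`, `X := L mod 5`, `L := L div 5`; together with at
most one blank-insertion firing, at most 13 transitions fire per simulated
tape move. -/
theorem left_move_in_twelve_steps (L X R : ℕ) :
    leftMoveSeq.length = 12 ∧
    leftMoveSeq.foldl (fun st f => f st) (L, X, R, 0, 0) =
      (L / 5, L % 5, R * 5 + X, 0, 0) ∧
    leftMoveSeq.length + 1 ≤ 13 := by
  refine ⟨rfl, ?_, le_rfl⟩
  change fireSeq leftMoveSeq (L, X, R, 0, 0) = _
  rw [leftMoveSeq_eq_append, fireSeq_append, fireSeq_ma5lrSeq, fireSeq_md5lrSeq]
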